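/- Let m, n ∈ ℝ³ be unit vectors with m ⊥ n, and let U be an element of SU(2) (a 2×2 complex unitary matrix with determinant 1). Then there exist real numbers β, γ, δ such that U = R_n(β) · R_m(γ) · R_n(δ). -/

import Mathlib

open Matrix

noncomputable section

def σx : Matrix (Fin 2) (Fin 2) ℂ := !![0, 1; 1, 0]
def σy : Matrix (Fin 2) (Fin 2) ℂ := !![0, -Complex.I; Complex.I, 0]
def σz : Matrix (Fin 2) (Fin 2) ℂ := !![1, 0; 0, -1]

/-- Rotation through angle `θ` about the axis directed along `v`:
`R_v(θ) = cos(θ/2)·I − i·sin(θ/2)·(v_x σx + v_y σy + v_z σz)`. -/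
def Rvec (v : Fin 3 → ℝ) (θ : ℝ) : Matrix (Fin 2) (Fin 2) ℂ :=
  (Real.cos (θ / 2) : ℂ) • (1 : Matrix (Fin 2) (Fin 2) ℂ)
    - (Complex.I * (Real.sin (θ / 2) : ℂ)) •
      ((v 0 : ℂ) • σx + (v 1 : ℂ) • σy + (v 2 : ℂ) • σz)

/-!
With `σ(v) = v_x σx + v_y σy + v_z σz`, the Pauli matrices multiply by
`σ(v) σ(w) = (v ⬝ w) + i σ(v × w)`. Hence every `U ∈ SU(2)` is `a₀ - i σ(a)` with
`a₀² + |a|² = 1`, and, because `σ(m)` anticommutes with `σ(n)` when `m ⊥ n`,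
`R_n(β) R_m(γ) R_n(δ) = cos(γ/2) R_n(β + δ) - i sin(γ/2) R_n(β - δ) σ(m)`.
Expanding `a` in the orthonormal frame `n, m, n × m`, it remains to write the unit vector
`(a₀, a ⬝ n, a ⬝ m, a ⬝ (n × m))` of `ℝ⁴` as `(cos θ cos t, cos θ sin t, sin θ cos u, sin θ sin u)`
and take `β = t + u`, `γ = 2θ`, `δ = t - u`.
-/

open Complex ComplexConjugate

lemma eq_dotProduct_smul_frame {n m : Fin 3 → ℝ} (hn : n ⬝ᵥ n = 1) (hm : m ⬝ᵥ m = 1)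
    (hnm : n ⬝ᵥ m = 0) (a : Fin 3 → ℝ) :
    a = (n ⬝ᵥ a) • n + (m ⬝ᵥ a) • m + (n ⨯₃ m ⬝ᵥ a) • n ⨯₃ m := by
  -- expand `q × (q × a)`, `q = n × m`, by the triple product formula in two ways
  have hqm : n ⨯₃ m ⨯₃ m = -n := by
    rw [cross_cross_eq_smul_sub_smul, hnm, hm]; simp
  have hqn : n ⨯₃ m ⨯₃ n = m := by
    rw [cross_cross_eq_smul_sub_smul, hn, dotProduct_comm, hnm]; simp
  have hqq : n ⨯₃ m ⬝ᵥ n ⨯₃ m = 1 := by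
    rw [cross_dot_cross, hn, hm, hnm, dotProduct_comm, hnm]; ring
  have hqa : n ⨯₃ m ⨯₃ a = (n ⬝ᵥ a) • m - (m ⬝ᵥ a) • n := cross_cross_eq_smul_sub_smul n m a
  have key := cross_cross_eq_smul_sub_smul' (n ⨯₃ m) (n ⨯₃ m) a
  rw [hqa, map_sub, map_smul, map_smul, hqm, hqn, hqq, one_smul] at key
  linear_combination (norm := module) key

lemma dotProduct_self_eq_frame {n m : Fin 3 → ℝ} (hn : n ⬝ᵥ n = 1) (hm : m ⬝ᵥ m = 1)
    (hnm : n ⬝ᵥ m = 0) (a : Fin 3 → ℝ) :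
    a ⬝ᵥ a = (n ⬝ᵥ a) ^ 2 + (m ⬝ᵥ a) ^ 2 + (n ⨯₃ m ⬝ᵥ a) ^ 2 := by
  nth_rewrite 1 [eq_dotProduct_smul_frame hn hm hnm a]
  simp only [add_dotProduct, smul_dotProduct, smul_eq_mul]
  ring

def pauli (v : Fin 3 → ℝ) : Matrix (Fin 2) (Fin 2) ℂ :=
  (v 0 : ℂ) • σx + (v 1 : ℂ) • σy + (v 2 : ℂ) • σz

lemma Rvec_eq (v : Fin 3 → ℝ) (θ : ℝ) :
    Rvec v θ = (Real.cos (θ / 2) : ℂ) • 1 - (I * Real.sin (θ / 2)) • pauli v := rfl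

lemma pauli_add (v w : Fin 3 → ℝ) : pauli (v + w) = pauli v + pauli w := by
  simp only [pauli, Pi.add_apply, ofReal_add, add_smul]; abel

lemma pauli_smul (r : ℝ) (v : Fin 3 → ℝ) : pauli (r • v) = (r : ℂ) • pauli v := by
  simp only [pauli, Pi.smul_apply, smul_eq_mul, ofReal_mul, smul_add, smul_smul]

lemma pauli_mul_pauli (v w : Fin 3 → ℝ) :
    pauli v * pauli w = ((v ⬝ᵥ w : ℝ) : ℂ) • 1 + I • pauli (v ⨯₃ w) := by
  ext i j
  fin_cases i <;> fin_cases j <;>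
    simp [pauli, σx, σy, σz, cross_apply, vec3_dotProduct, Matrix.mul_apply, Fin.sum_univ_two] <;>
    ring_nf <;> simp only [I_sq] <;> ring

lemma pauli_mul_self {v : Fin 3 → ℝ} (hv : v ⬝ᵥ v = 1) : pauli v * pauli v = 1 := by
  rw [pauli_mul_pauli, hv, cross_self]
  simp [pauli]

lemma pauli_mul_pauli_of_orthogonal {v w : Fin 3 → ℝ} (h : v ⬝ᵥ w = 0) :
    pauli v * pauli w = I • pauli (v ⨯₃ w) := by
  simp [pauli_mul_pauli, h]

lemma pauli_anticomm {v w : Fin 3 → ℝ} (h : v ⬝ᵥ w = 0) :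
    pauli w * pauli v = -(pauli v * pauli w) := by
  rw [pauli_mul_pauli_of_orthogonal h, pauli_mul_pauli_of_orthogonal (by rwa [dotProduct_comm]),
    ← cross_anticomm, ← neg_one_smul ℝ (v ⨯₃ w), pauli_smul]
  simp

lemma Rvec_mul_Rvec {v : Fin 3 → ℝ} (hv : v ⬝ᵥ v = 1) (α β : ℝ) :
    Rvec v α * Rvec v β = Rvec v (α + β) := by
  simp only [Rvec_eq, add_div, Real.cos_add, Real.sin_add, ofReal_add, ofReal_sub, ofReal_mul,
    sub_mul, mul_sub, smul_mul_assoc, mul_smul_comm, one_mul, mul_one, pauli_mul_self hv]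
  push_cast
  match_scalars
  · linear_combination (sin (α / 2) * sin (β / 2) : ℂ) * I_sq
  · ring

lemma pauli_mul_Rvec {v w : Fin 3 → ℝ} (h : v ⬝ᵥ w = 0) (θ : ℝ) :
    pauli w * Rvec v θ = Rvec v (-θ) * pauli w := by
  simp only [Rvec_eq, neg_div, Real.cos_neg, Real.sin_neg, ofReal_neg, mul_sub, sub_mul,
    mul_smul_comm, smul_mul_assoc, mul_one, one_mul, pauli_anticomm h]
  module

lemma Rvec_mul_pauli {v w : Fin 3 → ℝ} (h : v ⬝ᵥ w = 0) (θ : ℝ) :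
    Rvec v θ * pauli w =
      (Real.cos (θ / 2) : ℂ) • pauli w + (Real.sin (θ / 2) : ℂ) • pauli (v ⨯₃ w) := by
  simp only [Rvec_eq, sub_mul, smul_mul_assoc, one_mul, pauli_mul_pauli_of_orthogonal h,
    smul_smul]
  push_cast
  match_scalars
  · ring
  · linear_combination -(sin (θ / 2) : ℂ) * I_sq

lemma Rvec_mul_Rvec_mul_Rvec {n m : Fin 3 → ℝ} (hn : n ⬝ᵥ n = 1) (hnm : n ⬝ᵥ m = 0)
    (β γ δ : ℝ) :
    Rvec n β * Rvec m γ * Rvec n δ =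
      (Real.cos (γ / 2) : ℂ) • Rvec n (β + δ)
        - (I * Real.sin (γ / 2)) • (Rvec n (β - δ) * pauli m) := by
  rw [Rvec_eq m, mul_sub, sub_mul, mul_smul_comm, mul_one, smul_mul_assoc, mul_smul_comm,
    smul_mul_assoc, Rvec_mul_Rvec hn, mul_assoc, pauli_mul_Rvec hnm, ← mul_assoc,
    Rvec_mul_Rvec hn, sub_eq_add_neg β]

lemma star_eq_adjugate_of_mem_unitaryGroup {ι α : Type*} [Fintype ι] [DecidableEq ι] [CommRing α]
    [StarRing α] {U : Matrix ι ι α} (hU : U ∈ unitaryGroup ι α) (hdet : U.det = 1) :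
    star U = U.adjugate := by
  calc star U = star U * (U * U.adjugate) := by rw [mul_adjugate, hdet, one_smul, mul_one]
    _ = U.adjugate := by rw [← mul_assoc, (Unitary.mem_iff.mp hU).1, one_mul]

lemma exists_eq_smul_one_sub_I_smul_pauli {U : Matrix (Fin 2) (Fin 2) ℂ}
    (hU : U ∈ unitaryGroup (Fin 2) ℂ) (hdet : U.det = 1) :
    ∃ (a₀ : ℝ) (a : Fin 3 → ℝ), a₀ ^ 2 + a ⬝ᵥ a = 1 ∧ U = (a₀ : ℂ) • 1 - I • pauli a := by
  have hadj := star_eq_adjugate_of_mem_unitaryGroup hU hdet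
  rw [adjugate_fin_two] at hadj
  have h11 : U 1 1 = conj (U 0 0) := by
    simpa [star_apply] using (congrFun₂ hadj 0 0).symm
  have h10 : U 1 0 = -conj (U 0 1) := by
    simpa [star_apply] using congrArg conj (congrFun₂ hadj 0 1)
  refine ⟨(U 0 0).re, ![-(U 0 1).im, -(U 0 1).re, -(U 0 0).im], ?_, ?_⟩
  · rw [det_fin_two, h11, h10, mul_neg, sub_neg_eq_add, mul_conj, mul_conj] at hdet
    have hnorm : normSq (U 0 0) + normSq (U 0 1) = 1 := by exact_mod_cast hdet
    rw [normSq_apply, normSq_apply] at hnorm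
    rw [vec3_dotProduct]
    dsimp only [Matrix.cons_val]
    linear_combination hnorm
  · ext i j
    fin_cases i <;> fin_cases j <;> apply Complex.ext <;>
      simp [pauli, σx, σy, σz, h11, h10]

lemma exists_angles_of_sum_sq_eq_one {x y z w : ℝ} (h : x ^ 2 + y ^ 2 + z ^ 2 + w ^ 2 = 1) :
    ∃ θ t u : ℝ, Real.cos θ * Real.cos t = x ∧ Real.cos θ * Real.sin t = y ∧
      Real.sin θ * Real.cos u = z ∧ Real.sin θ * Real.sin u = w := by
  set p : ℂ := ⟨x, y⟩
  set q : ℂ := ⟨z, w⟩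
  set r : ℂ := ⟨‖p‖, ‖q‖⟩
  have hr : ‖r‖ = 1 := by
    refine (pow_eq_one_iff_of_nonneg (norm_nonneg r) two_ne_zero).mp ?_
    simp only [r, Complex.sq_norm, normSq_mk, ← sq, p, q]
    linear_combination h
  have hcos : Real.cos (arg r) = ‖p‖ := by simpa [hr] using norm_mul_cos_arg r
  have hsin : Real.sin (arg r) = ‖q‖ := by simpa [hr] using norm_mul_sin_arg r
  exact ⟨arg r, arg p, arg q, hcos ▸ norm_mul_cos_arg p, hcos ▸ norm_mul_sin_arg p,
    hsin ▸ norm_mul_cos_arg q, hsin ▸ norm_mul_sin_arg q⟩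

theorem su2_euler_decomposition (m n : Fin 3 → ℝ)
    (hm : m 0 ^ 2 + m 1 ^ 2 + m 2 ^ 2 = 1)
    (hn : n 0 ^ 2 + n 1 ^ 2 + n 2 ^ 2 = 1)
    (hmn : m 0 * n 0 + m 1 * n 1 + m 2 * n 2 = 0)
    (U : Matrix (Fin 2) (Fin 2) ℂ)
    (hU : U ∈ Matrix.unitaryGroup (Fin 2) ℂ)
    (hdet : U.det = 1) :
    ∃ β γ δ : ℝ, U = Rvec n β * Rvec m γ * Rvec n δ := by
  have hn₁ : n ⬝ᵥ n = 1 := by rw [vec3_dotProduct]; linear_combination hn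
  have hm₁ : m ⬝ᵥ m = 1 := by rw [vec3_dotProduct]; linear_combination hm
  have hnm : n ⬝ᵥ m = 0 := by rw [vec3_dotProduct]; linear_combination hmn
  obtain ⟨a₀, a, ha, rfl⟩ := exists_eq_smul_one_sub_I_smul_pauli hU hdet
  have hsum : a₀ ^ 2 + (n ⬝ᵥ a) ^ 2 + (m ⬝ᵥ a) ^ 2 + (n ⨯₃ m ⬝ᵥ a) ^ 2 = 1 := by
    linear_combination ha - dotProduct_self_eq_frame hn₁ hm₁ hnm a
  obtain ⟨θ, t, u, h₁, h₂, h₃, h₄⟩ := exists_angles_of_sum_sq_eq_one hsum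
  refine ⟨t + u, 2 * θ, t - u, ?_⟩
  have hβδ : (t + u + (t - u)) / 2 = t := by ring
  have hβδ' : (t + u - (t - u)) / 2 = u := by ring
  have hγ : 2 * θ / 2 = θ := by ring
  rw [Rvec_mul_Rvec_mul_Rvec hn₁ hnm, Rvec_mul_pauli hnm, Rvec_eq, hβδ, hβδ', hγ,
    eq_dotProduct_smul_frame hn₁ hm₁ hnm a, pauli_add, pauli_add, pauli_smul, pauli_smul,
    pauli_smul, ← h₁, ← h₂, ← h₃, ← h₄]
  push_cast
  module
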